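/- Let V ⊆ F₂^{2n} be any subspace. Then there exist nonnegative integers k and l with k + 2l = dim(V) and a basis u₁,…,u_k, v₁,…,v_l, w₁,…,w_l of V such that: (1) u_i ⊙ x = 0 for every x ∈ V and every 1 ≤ i ≤ k; (2) v_i ⊙ v_j = 0 for all 1 ≤ i, j ≤ l; (3) w_i ⊙ w_j = 0 for all 1 ≤ i, j ≤ l; (4) v_i ⊙ w_j = δ_{ij} for all 1 ≤ i, j ≤ l. -/

import Mathlib

open scoped BigOperators Classical

/-- The symplectic inner product on `F₂^{2n}` (coordinates indexed by `Fin n ⊕ Fin n`). -/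
def symp {n : ℕ} (u v : (Fin n ⊕ Fin n) → ZMod 2) : ZMod 2 :=
  ∑ i : Fin n, (u (Sum.inl i) * v (Sum.inr i) + u (Sum.inr i) * v (Sum.inl i))

section Helpers

variable {n : ℕ}

lemma zmod2_eq_one : ∀ a : ZMod 2, a ≠ 0 → a = 1 := by decide

lemma zmod2_add_self (a : ZMod 2) : a + a = 0 := by revert a; decide

lemma symp_comm (u v : (Fin n ⊕ Fin n) → ZMod 2) : symp u v = symp v u := by
  unfold symp; exact Finset.sum_congr rfl fun i _ => by ring

lemma symp_self (u : (Fin n ⊕ Fin n) → ZMod 2) : symp u u = 0 := by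
  unfold symp
  rw [Finset.sum_eq_zero]
  intro i _
  rw [mul_comm (u (Sum.inr i))]; exact zmod2_add_self _

/-- `symp u` as a linear map. -/
def sympL (u : (Fin n ⊕ Fin n) → ZMod 2) : ((Fin n ⊕ Fin n) → ZMod 2) →ₗ[ZMod 2] ZMod 2 where
  toFun v := symp u v
  map_add' v w := by
    unfold symp; rw [← Finset.sum_add_distrib]
    exact Finset.sum_congr rfl fun i _ => by simp [Pi.add_apply]; ring
  map_smul' c v := by
    simp only [RingHom.id_apply, smul_eq_mul]
    unfold symp; rw [Finset.mul_sum]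
    exact Finset.sum_congr rfl fun i _ => by simp [Pi.smul_apply, smul_eq_mul]; ring

@[simp] lemma sympL_apply (u v : (Fin n ⊕ Fin n) → ZMod 2) : sympL u v = symp u v := rfl

lemma symp_add_right (u v w : (Fin n ⊕ Fin n) → ZMod 2) :
    symp u (v + w) = symp u v + symp u w := (sympL u).map_add v w

lemma symp_smul_right (u : (Fin n ⊕ Fin n) → ZMod 2) (c : ZMod 2)
    (v : (Fin n ⊕ Fin n) → ZMod 2) :
    symp u (c • v) = c * symp u v := (sympL u).map_smul c v

lemma symp_zero_right (u : (Fin n ⊕ Fin n) → ZMod 2) : symp u 0 = 0 := (sympL u).map_zero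

/-- A spanning family of the right cardinality is linearly independent. -/
lemma liHelper {ι : Type} [Fintype ι] (V : Submodule (ZMod 2) ((Fin n ⊕ Fin n) → ZMod 2))
    (F : ι → (Fin n ⊕ Fin n) → ZMod 2) (hmem : ∀ i, F i ∈ V)
    (hspan : Submodule.span (ZMod 2) (Set.range F) = V)
    (hcard : Fintype.card ι = Module.finrank (ZMod 2) V) :
    LinearIndependent (ZMod 2) F := by
  classical
  let G : ι → V := fun i => ⟨F i, hmem i⟩
  have hmap : Submodule.map V.subtype (Submodule.span (ZMod 2) (Set.range G)) =
      Submodule.span (ZMod 2) (Set.range F) := by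
    rw [Submodule.map_span]
    congr 1
    rw [← Set.range_comp]
    rfl
  have hGtop : Submodule.span (ZMod 2) (Set.range G) = ⊤ := by
    apply Submodule.map_injective_of_injective V.injective_subtype
    rw [hmap, hspan, Submodule.map_top, Submodule.range_subtype]
  have hGLI : LinearIndependent (ZMod 2) G :=
    linearIndependent_of_top_le_span_of_card_eq_finrank (le_of_eq hGtop.symm) hcard
  exact hGLI.map' V.subtype V.ker_subtype

theorem aux (n : ℕ) : ∀ m : ℕ, ∀ V : Submodule (ZMod 2) ((Fin n ⊕ Fin n) → ZMod 2),
    Module.finrank (ZMod 2) V = m →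
    ∃ (k l : ℕ) (u : Fin k → (Fin n ⊕ Fin n) → ZMod 2)
      (v w : Fin l → (Fin n ⊕ Fin n) → ZMod 2),
      k + 2 * l = Module.finrank (ZMod 2) V ∧
      (∀ i, u i ∈ V) ∧ (∀ i, v i ∈ V) ∧ (∀ i, w i ∈ V) ∧
      LinearIndependent (ZMod 2) (Sum.elim u (Sum.elim v w)) ∧
      Submodule.span (ZMod 2) (Set.range (Sum.elim u (Sum.elim v w))) = V ∧
      (∀ i, ∀ x ∈ V, symp (u i) x = 0) ∧
      (∀ i j, symp (v i) (v j) = 0) ∧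
      (∀ i j, symp (w i) (w j) = 0) ∧
      (∀ i j, symp (v i) (w j) = if i = j then 1 else 0) := by
  intro m
  induction m using Nat.strong_induction_on with
  | _ m IH =>
  intro V hV
  by_cases hdeg : ∀ x ∈ V, ∀ y ∈ V, symp x y = 0
  · -- totally isotropic case
    classical
    let b := Module.finBasis (ZMod 2) V
    set k := Module.finrank (ZMod 2) V with hk
    refine ⟨k, 0, fun i => ((b i : V) : (Fin n ⊕ Fin n) → ZMod 2),
      fun i => Fin.elim0 i, fun i => Fin.elim0 i, by omega,
      fun i => (b i).2, fun i => Fin.elim0 i, fun i => Fin.elim0 i, ?_, ?_,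
      fun i z hz => hdeg _ (b i).2 z hz, fun i => Fin.elim0 i, fun i => Fin.elim0 i,
      fun i => Fin.elim0 i⟩
    · -- linear independence
      apply liHelper V
      · intro i
        cases i with
        | inl a => exact (b a).2
        | inr c => exact Fin.elim0 (c.elim (fun x => x) (fun x => x))
      · rw [Set.Sum.elim_range]
        have h0 : Set.range (Sum.elim (fun i : Fin 0 => Fin.elim0 i)
            (fun i : Fin 0 => Fin.elim0 i)) = (∅ : Set ((Fin n ⊕ Fin n) → ZMod 2)) :=
          Set.range_eq_empty _
        rw [h0, Set.union_empty]
        have : (fun i => ((b i : V) : (Fin n ⊕ Fin n) → ZMod 2)) = V.subtype ∘ b := rfl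
        rw [this, Set.range_comp, Submodule.span_image, b.span_eq, Submodule.map_top,
          Submodule.range_subtype]
      · simp [Fintype.card_sum]; exact hk
    · -- span
      rw [Set.Sum.elim_range]
      have h0 : Set.range (Sum.elim (fun i : Fin 0 => Fin.elim0 i)
          (fun i : Fin 0 => Fin.elim0 i)) = (∅ : Set ((Fin n ⊕ Fin n) → ZMod 2)) :=
        Set.range_eq_empty _
      rw [h0, Set.union_empty]
      have : (fun i => ((b i : V) : (Fin n ⊕ Fin n) → ZMod 2)) = V.subtype ∘ b := rfl
      rw [this, Set.range_comp, Submodule.span_image, b.span_eq, Submodule.map_top,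
        Submodule.range_subtype]
  · -- there is a hyperbolic pair
    push_neg at hdeg
    obtain ⟨x, hxV, y, hyV, hxy0⟩ := hdeg
    have hxy : symp x y = 1 := zmod2_eq_one _ hxy0
    have hyx : symp y x = 1 := by rw [symp_comm]; exact hxy
    set V' : Submodule (ZMod 2) ((Fin n ⊕ Fin n) → ZMod 2) :=
      (V ⊓ LinearMap.ker (sympL x)) ⊓ LinearMap.ker (sympL y) with hV'def
    have hmem : ∀ z, z ∈ V' ↔ z ∈ V ∧ symp x z = 0 ∧ symp y z = 0 := by
      intro z
      simp [hV'def, Submodule.mem_inf, LinearMap.mem_ker, and_assoc]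
    have hV'V : V' ≤ V := fun z hz => ((hmem z).mp hz).1
    have hV'x : ∀ z ∈ V', symp x z = 0 := fun z hz => ((hmem z).mp hz).2.1
    have hV'y : ∀ z ∈ V', symp y z = 0 := fun z hz => ((hmem z).mp hz).2.2
    have h2smul : ∀ (c : ZMod 2) (t : (Fin n ⊕ Fin n) → ZMod 2), c • t + c • t = 0 := by
      intro c t; rw [← add_smul, zmod2_add_self, zero_smul]
    have hdecomp : ∀ z ∈ V, z + (symp y z) • x + (symp x z) • y ∈ V' := by
      intro z hz
      rw [hmem]
      refine ⟨V.add_mem (V.add_mem hz (V.smul_mem _ hxV)) (V.smul_mem _ hyV), ?_, ?_⟩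
      · rw [symp_add_right, symp_add_right, symp_smul_right, symp_smul_right, symp_self,
          hxy, mul_zero, mul_one, add_zero]
        exact zmod2_add_self _
      · rw [symp_add_right, symp_add_right, symp_smul_right, symp_smul_right, symp_self,
          hyx, mul_zero, mul_one, add_zero]
        exact zmod2_add_self _
    have hrepr : ∀ z ∈ V, ∃ z' ∈ V', z = z' + (symp y z) • x + (symp x z) • y := by
      intro z hz
      refine ⟨z + (symp y z) • x + (symp x z) • y, hdecomp z hz, ?_⟩
      have key : ∀ (Z A B : (Fin n ⊕ Fin n) → ZMod 2), A + A = 0 → B + B = 0 →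
          Z = Z + A + B + A + B := by
        intro Z A B hA hB
        rw [show Z + A + B + A + B = Z + (A + A) + (B + B) by abel, hA, hB, add_zero, add_zero]
      exact key z _ _ (h2smul _ _) (h2smul _ _)
    set P : Submodule (ZMod 2) ((Fin n ⊕ Fin n) → ZMod 2) :=
      Submodule.span (ZMod 2) {x, y} with hPdef
    have hPV : P ≤ V := by
      rw [hPdef, Submodule.span_le]
      intro z hz
      rcases hz with rfl | hz
      · exact hxV
      · rcases hz with rfl; exact hyV
    have hsup : V' ⊔ P = V := by
      apply le_antisymm (sup_le hV'V hPV)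
      intro z hz
      obtain ⟨z', hz', hzeq⟩ := hrepr z hz
      rw [hzeq]
      refine Submodule.add_mem _ (Submodule.add_mem _ (Submodule.mem_sup_left hz') ?_) ?_
      · exact Submodule.mem_sup_right (Submodule.smul_mem _ _
          (Submodule.subset_span (by simp)))
      · exact Submodule.mem_sup_right (Submodule.smul_mem _ _
          (Submodule.subset_span (by simp)))
    have hinf : V' ⊓ P = ⊥ := by
      rw [eq_bot_iff]
      intro z hz
      obtain ⟨hz1, hz2⟩ := Submodule.mem_inf.mp hz
      rw [hPdef, Submodule.mem_span_pair] at hz2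
      obtain ⟨a, c, hac⟩ := hz2
      have h1 := hV'x z hz1
      have h2 := hV'y z hz1
      rw [← hac, symp_add_right, symp_smul_right, symp_smul_right, symp_self, hxy,
        mul_zero, mul_one, zero_add] at h1
      rw [← hac, symp_add_right, symp_smul_right, symp_smul_right, symp_self, hyx,
        mul_zero, mul_one, add_zero] at h2
      rw [← hac, h1, h2]
      simp
    have hxyLI : LinearIndependent (ZMod 2) ![x, y] := by
      rw [LinearIndependent.pair_iff]
      intro s t hst
      have h1 : symp x (s • x + t • y) = 0 := by rw [hst, symp_zero_right]
      have h2 : symp y (s • x + t • y) = 0 := by rw [hst, symp_zero_right]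
      rw [symp_add_right, symp_smul_right, symp_smul_right, symp_self, hxy,
        mul_zero, mul_one, zero_add] at h1
      rw [symp_add_right, symp_smul_right, symp_smul_right, symp_self, hyx,
        mul_zero, mul_one, add_zero] at h2
      exact ⟨h2, h1⟩
    have hrange2 : Set.range ![x, y] = ({x, y} : Set ((Fin n ⊕ Fin n) → ZMod 2)) := by
      ext z; simp [Fin.exists_fin_two]; tauto
    have hfP : Module.finrank (ZMod 2) P = 2 := by
      rw [hPdef, ← hrange2, finrank_span_eq_card hxyLI]
      simp
    have hVfin : Module.finrank (ZMod 2) V = Module.finrank (ZMod 2) V' + 2 := by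
      have h := Submodule.finrank_sup_add_finrank_inf_eq V' P
      rw [hsup, hinf, hfP, finrank_bot, add_zero] at h
      omega
    have hlt : Module.finrank (ZMod 2) V' < m := by omega
    obtain ⟨k, l, u, v, w, hkl, huV, hvV, hwV, hLI, hspan, hu, hvv, hww, hvw⟩ :=
      IH (Module.finrank (ZMod 2) V') hlt V' rfl
    set F := Sum.elim u (Sum.elim (Fin.cons x v) (Fin.cons y w)) with hFdef
    have hFmem : ∀ i, F i ∈ V := by
      intro i
      cases i with
      | inl a => exact hV'V (huV a)
      | inr c =>
        cases c with
        | inl a =>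
          induction a using Fin.cases with
          | zero => simpa [hFdef] using hxV
          | succ j => simpa [hFdef] using hV'V (hvV j)
        | inr a =>
          induction a using Fin.cases with
          | zero => simpa [hFdef] using hyV
          | succ j => simpa [hFdef] using hV'V (hwV j)
    have hspanF : Submodule.span (ZMod 2) (Set.range F) = V := by
      apply le_antisymm
      · rw [Submodule.span_le]; rintro z ⟨i, rfl⟩; exact hFmem i
      · rw [← hsup]
        apply sup_le
        · rw [← hspan]
          apply Submodule.span_mono
          rintro z ⟨i, rfl⟩
          cases i with
          | inl a => exact ⟨Sum.inl a, rfl⟩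
          | inr c =>
            cases c with
            | inl a => exact ⟨Sum.inr (Sum.inl a.succ), by simp [hFdef]⟩
            | inr a => exact ⟨Sum.inr (Sum.inr a.succ), by simp [hFdef]⟩
        · rw [hPdef, Submodule.span_le]
          intro z hz
          simp only [Set.mem_insert_iff, Set.mem_singleton_iff] at hz
          rcases hz with rfl | rfl
          · exact Submodule.subset_span ⟨Sum.inr (Sum.inl 0), by simp [hFdef]⟩
          · exact Submodule.subset_span ⟨Sum.inr (Sum.inr 0), by simp [hFdef]⟩
    have hLIF : LinearIndependent (ZMod 2) F :=
      liHelper V F hFmem hspanF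
        (by simp only [Fintype.card_sum, Fintype.card_fin]; omega)
    refine ⟨k, l + 1, u, Fin.cons x v, Fin.cons y w, by omega,
      fun i => hV'V (huV i), ?_, ?_, ?_, ?_, ?_, ?_, ?_, ?_⟩
    · intro i
      induction i using Fin.cases with
      | zero => simpa using hxV
      | succ j => simpa using hV'V (hvV j)
    · intro i
      induction i using Fin.cases with
      | zero => simpa using hyV
      | succ j => simpa using hV'V (hwV j)
    · exact hLIF
    · exact hspanF
    · -- u orthogonal to all of V
      intro i z hz
      obtain ⟨z', hz', hzeq⟩ := hrepr z hz
      rw [hzeq, symp_add_right, symp_add_right, symp_smul_right, symp_smul_right,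
        hu i z' hz']
      have hx0 : symp (u i) x = 0 := by rw [symp_comm]; exact hV'x _ (huV i)
      have hy0 : symp (u i) y = 0 := by rw [symp_comm]; exact hV'y _ (huV i)
      rw [hx0, hy0]; ring
    · intro i j
      induction i using Fin.cases with
      | zero =>
        induction j using Fin.cases with
        | zero => simpa using symp_self x
        | succ j => simpa using hV'x _ (hvV j)
      | succ i =>
        induction j using Fin.cases with
        | zero =>
          simp only [Fin.cons_succ, Fin.cons_zero]
          rw [symp_comm]; exact hV'x _ (hvV i)
        | succ j => simpa using hvv i j
    · intro i j
      induction i using Fin.cases with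
      | zero =>
        induction j using Fin.cases with
        | zero => simpa using symp_self y
        | succ j => simpa using hV'y _ (hwV j)
      | succ i =>
        induction j using Fin.cases with
        | zero =>
          simp only [Fin.cons_succ, Fin.cons_zero]
          rw [symp_comm]; exact hV'y _ (hwV i)
        | succ j => simpa using hww i j
    · intro i j
      induction i using Fin.cases with
      | zero =>
        induction j using Fin.cases with
        | zero => simpa using hxy
        | succ j =>
          have hne : (0 : Fin (l + 1)) ≠ j.succ := (Fin.succ_ne_zero j).symm
          simp only [Fin.cons_zero, Fin.cons_succ, if_neg hne]
          exact hV'x _ (hwV j)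
      | succ i =>
        induction j using Fin.cases with
        | zero =>
          have hne : (i.succ : Fin (l + 1)) ≠ 0 := Fin.succ_ne_zero i
          simp only [Fin.cons_zero, Fin.cons_succ, if_neg hne]
          rw [symp_comm]; exact hV'y _ (hvV i)
        | succ j =>
          simp only [Fin.cons_succ, Fin.succ_inj]
          exact hvw i j


end Helpers

/-- Every subspace `V ⊆ F₂^{2n}` admits a symplectic basis: `k + 2l = dim V` and a
basis `u₁,…,u_k, v₁,…,v_l, w₁,…,w_l` of `V` such that each `u_i` is symplectically
orthogonal to all of `V`, `v_i ⊙ v_j = w_i ⊙ w_j = 0`, and `v_i ⊙ w_j = δ_{ij}`. -/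
theorem stmt12 (n : ℕ) (V : Submodule (ZMod 2) ((Fin n ⊕ Fin n) → ZMod 2)) :
    ∃ (k l : ℕ) (u : Fin k → (Fin n ⊕ Fin n) → ZMod 2)
      (v w : Fin l → (Fin n ⊕ Fin n) → ZMod 2),
      k + 2 * l = Module.finrank (ZMod 2) V ∧
      (∀ i, u i ∈ V) ∧ (∀ i, v i ∈ V) ∧ (∀ i, w i ∈ V) ∧
      LinearIndependent (ZMod 2) (Sum.elim u (Sum.elim v w)) ∧
      Submodule.span (ZMod 2) (Set.range (Sum.elim u (Sum.elim v w))) = V ∧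
      (∀ i, ∀ x ∈ V, symp (u i) x = 0) ∧
      (∀ i j, symp (v i) (v j) = 0) ∧
      (∀ i j, symp (w i) (w j) = 0) ∧
      (∀ i j, symp (v i) (w j) = if i = j then 1 else 0) := by
  obtain ⟨k, l, u, v, w, h⟩ := aux n (Module.finrank (ZMod 2) V) V rfl
  exact ⟨k, l, u, v, w, h⟩
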